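/- arXiv:1305.6226 — 9 statements merged into one kernel-verified Lean document; each statement's English description precedes it below -/
import Mathlib

section
/- A family of vectors Φ = {φ_n}_{n=1}^N in ℝ^M allows phase retrieval (i.e., the map x ↦ (|⟨x,φ_n⟩|)_{n=1}^N is injective on ℝ^M modulo sign) if and only if Φ has the complement property. -/
open RealInnerProductSpace

/-!
If neither `φ '' s` nor `φ '' sᶜ` spans, pick nonzero `u ⟂ φ '' s` and `v ⟂ φ '' sᶜ`; then `u + v`
and `u - v` have the same measurements but differ by more than a sign. Conversely, if
`|⟪x, φ n⟫| = |⟪y, φ n⟫|` for all `n`, then every `φ n` is orthogonal to `x - y` or to `x + y`,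
so by the complement property one of the two vanishes.
-/

section PhaseRetrieval

variable {ι E : Type*} [NormedAddCommGroup E] [InnerProductSpace ℝ E]

def AllowsPhaseRetrieval (φ : ι → E) : Prop :=
  ∀ x y : E, (∀ n, |⟪x, φ n⟫| = |⟪y, φ n⟫|) → x = y ∨ x = -y

def ComplementProperty (φ : ι → E) : Prop :=
  ∀ s : Set ι, Submodule.span ℝ (φ '' s) = ⊤ ∨ Submodule.span ℝ (φ '' sᶜ) = ⊤

theorem Submodule.mem_orthogonal_span_iff {S : Set E} {z : E} :
    z ∈ (Submodule.span ℝ S)ᗮ ↔ ∀ w ∈ S, ⟪z, w⟫ = 0 := by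
  rw [← Submodule.span_singleton_le_iff_mem, ← Submodule.isOrtho_iff_le, Submodule.isOrtho_span]
  simp

theorem eq_zero_of_span_image_eq_top {φ : ι → E} {s : Set ι}
    (hs : Submodule.span ℝ (φ '' s) = ⊤) {z : E} (hz : ∀ n ∈ s, ⟪z, φ n⟫ = 0) : z = 0 := by
  have hz' : z ∈ (Submodule.span ℝ (φ '' s))ᗮ := by
    simpa [Submodule.mem_orthogonal_span_iff] using hz
  simpa [hs] using hz'

theorem exists_ne_zero_of_span_image_ne_top [FiniteDimensional ℝ E] {φ : ι → E} {s : Set ι}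
    (hs : Submodule.span ℝ (φ '' s) ≠ ⊤) : ∃ z : E, z ≠ 0 ∧ ∀ n ∈ s, ⟪z, φ n⟫ = 0 := by
  rw [ne_eq, ← Submodule.orthogonal_eq_bot_iff, ← ne_eq, Submodule.ne_bot_iff] at hs
  obtain ⟨z, hz, hz0⟩ := hs
  exact ⟨z, hz0, by simpa [Submodule.mem_orthogonal_span_iff] using hz⟩

theorem abs_inner_eq_abs_inner_iff {x y v : E} :
    |⟪x, v⟫| = |⟪y, v⟫| ↔ ⟪x - y, v⟫ = 0 ∨ ⟪x + y, v⟫ = 0 := by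
  rw [abs_eq_abs, inner_sub_left, inner_add_left, sub_eq_zero, add_eq_zero_iff_eq_neg]

theorem ComplementProperty.allowsPhaseRetrieval {φ : ι → E} (hφ : ComplementProperty φ) :
    AllowsPhaseRetrieval φ := by
  intro x y h
  let s := {n | ⟪x - y, φ n⟫ = 0}
  have hsc : ∀ n ∈ sᶜ, ⟪x + y, φ n⟫ = 0 := fun n hn =>
    (abs_inner_eq_abs_inner_iff.mp (h n)).resolve_left hn
  rcases hφ s with hs | hs
  · exact .inl (sub_eq_zero.mp (eq_zero_of_span_image_eq_top hs fun _ => id))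
  · exact .inr (eq_neg_of_add_eq_zero_left (eq_zero_of_span_image_eq_top hs hsc))

theorem eq_zero_of_add_eq_sub {u v : E} (h : u + v = u - v) : v = 0 := by
  have := IsAddTorsionFree.of_isTorsionFree ℝ E
  exact self_eq_neg.mp (by simpa [sub_eq_add_neg] using h)

theorem AllowsPhaseRetrieval.complementProperty [FiniteDimensional ℝ E] {φ : ι → E}
    (hφ : AllowsPhaseRetrieval φ) : ComplementProperty φ := by
  intro s
  by_contra! h
  obtain ⟨u, hu0, hu⟩ := exists_ne_zero_of_span_image_ne_top h.1
  obtain ⟨v, hv0, hv⟩ := exists_ne_zero_of_span_image_ne_top h.2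
  have hmeas : ∀ n, |⟪u + v, φ n⟫| = |⟪u - v, φ n⟫| := by
    intro n
    by_cases hn : n ∈ s
    · simp [inner_add_left, inner_sub_left, hu n hn]
    · simp [inner_add_left, inner_sub_left, hv n hn]
  rcases hφ _ _ hmeas with h | h
  · exact hv0 (eq_zero_of_add_eq_sub h)
  · rw [neg_sub, add_comm] at h
    exact hu0 (eq_zero_of_add_eq_sub h)

theorem allowsPhaseRetrieval_iff_complementProperty [FiniteDimensional ℝ E] (φ : ι → E) :
    AllowsPhaseRetrieval φ ↔ ComplementProperty φ :=
  ⟨AllowsPhaseRetrieval.complementProperty, ComplementProperty.allowsPhaseRetrieval⟩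

theorem complementProperty_iff_forall_finset [Finite ι] (φ : ι → E) :
    ComplementProperty φ ↔ ∀ I : Finset ι,
      Submodule.span ℝ (φ '' (I : Set ι)) = ⊤ ∨ Submodule.span ℝ (φ '' ((I : Set ι)ᶜ)) = ⊤ :=
  ⟨fun h I => h I, fun h s => by simpa using h (Set.toFinite s).toFinset⟩

end PhaseRetrieval

/-- A family of vectors in ℝ^M allows phase retrieval iff it has the complement property. -/
theorem stmt_0 (M N : ℕ) (φ : Fin N → EuclideanSpace ℝ (Fin M)) :
    (∀ x y : EuclideanSpace ℝ (Fin M),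
        (∀ n, |⟪x, φ n⟫| = |⟪y, φ n⟫|) → x = y ∨ x = -y) ↔
    (∀ I : Finset (Fin N),
        Submodule.span ℝ (φ '' (I : Set (Fin N))) = ⊤ ∨
        Submodule.span ℝ (φ '' ((I : Set (Fin N))ᶜ)) = ⊤) :=
  (allowsPhaseRetrieval_iff_complementProperty φ).trans (complementProperty_iff_forall_finset φ)
end

section
/- Any family of vectors in ℝ^M with the complement property contains at least 2M − 1 vectors. -/
lemma card_ge_of_span_top {M N : ℕ} (φ : Fin N → EuclideanSpace ℝ (Fin M))
    (s : Finset (Fin N))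
    (h : Submodule.span ℝ (φ '' (s : Set (Fin N))) = ⊤) : M ≤ s.card := by
  classical
  by_contra hlt
  push_neg at hlt
  have himg : φ '' (s : Set (Fin N)) = ((s.image φ : Finset (EuclideanSpace ℝ (Fin M))) : Set (EuclideanSpace ℝ (Fin M))) := by
    simp [Finset.coe_image]
  rw [himg] at h
  haveI : Fintype ((s.image φ : Finset (EuclideanSpace ℝ (Fin M))) : Set (EuclideanSpace ℝ (Fin M))) := FinsetCoe.fintype _
  have hcard : ((s.image φ : Finset (EuclideanSpace ℝ (Fin M))) : Set (EuclideanSpace ℝ (Fin M))).toFinset.card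
      < Module.finrank ℝ (EuclideanSpace ℝ (Fin M)) := by
    rw [finrank_euclideanSpace_fin]
    have he : ((s.image φ : Finset (EuclideanSpace ℝ (Fin M))) : Set (EuclideanSpace ℝ (Fin M))).toFinset.card = (s.image φ).card := by simp
    rw [he]
    exact lt_of_le_of_lt (Finset.card_image_le) hlt
  exact (span_lt_top_of_card_lt_finrank hcard).ne h

/-- Any family of vectors in ℝ^M with the complement property has at least 2M-1 vectors. -/
theorem stmt_2 (M N : ℕ) (φ : Fin N → EuclideanSpace ℝ (Fin M))
    (hcp : ∀ I : Finset (Fin N),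
        Submodule.span ℝ (φ '' (I : Set (Fin N))) = ⊤ ∨
        Submodule.span ℝ (φ '' ((I : Set (Fin N))ᶜ)) = ⊤) :
    N ≥ 2 * M - 1 := by
  rcases Nat.eq_zero_or_pos M with hM | hM
  · simp [hM]
  by_contra hN
  push_neg at hN
  classical
  obtain ⟨I, hIcard, hIccard⟩ : ∃ I : Finset (Fin N), I.card ≤ M - 1 ∧ Iᶜ.card ≤ M - 1 := by
    rcases le_or_gt N (M - 1) with h | h
    · exact ⟨Finset.univ, by simpa using h, by simp⟩
    · refine ⟨Finset.Iio ⟨M - 1, by omega⟩, ?_, ?_⟩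
      · rw [Fin.card_Iio]
      · have := Finset.card_compl (Finset.Iio (⟨M - 1, by omega⟩ : Fin N))
        rw [this, Fin.card_Iio]
        simp only [Fintype.card_fin]
        omega
  rcases hcp I with h | h
  · have := card_ge_of_span_top φ I h
    omega
  · rw [← Finset.coe_compl] at h
    have := card_ge_of_span_top φ Iᶜ h
    omega
end

section
/- For every natural number M ≥ 2 and every nonincreasing sequence of natural numbers M−1 ≥ I_1 ≥ I_2 ≥ ... ≥ I_M ≥ 1, there exists an invertible M×M real matrix with entries in {0,1} such that the k-th row has exactly I_k entries equal to 1. -/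
open Submodule Set Module

/-- The 0/1 vectors of weight `c` in `Fin M → ℝ`, for `1 ≤ c < M`, span everything. -/
lemma span_weight_top (M c : ℕ) (hc1 : 1 ≤ c) (hcM : c < M) :
    Submodule.span ℝ {v : Fin M → ℝ | (∀ z, v z = 0 ∨ v z = 1) ∧
      (Finset.univ.filter (fun z => v z = 1)).card = c} = ⊤ := by
  set S : Set (Fin M → ℝ) := {v : Fin M → ℝ | (∀ z, v z = 0 ∨ v z = 1) ∧
      (Finset.univ.filter (fun z => v z = 1)).card = c} with hS
  have hind : ∀ T : Finset (Fin M), T.card = c →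
      (fun z => if z ∈ T then (1:ℝ) else 0) ∈ S := by
    intro T hT
    constructor
    · intro z; by_cases h : z ∈ T <;> simp [h]
    · rw [← hT]; congr 1; ext z; by_cases h : z ∈ T <;> simp [h]
  have hswap : ∀ i j : Fin M, i ≠ j →
      ((Pi.single i 1 : Fin M → ℝ) - Pi.single j 1) ∈ Submodule.span ℝ S := by
    intro i j hij
    have hcard : c - 1 ≤ (Finset.univ \ {i, j} : Finset (Fin M)).card := by
      rw [Finset.card_sdiff_of_subset (Finset.subset_univ _), Finset.card_univ, Fintype.card_fin,
        Finset.card_pair hij]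
      omega
    obtain ⟨T0, hT0sub, hT0card⟩ := Finset.exists_subset_card_eq hcard
    have hi : i ∉ T0 := fun h => by
      have := hT0sub h; simp [Finset.mem_sdiff] at this
    have hj : j ∉ T0 := fun h => by
      have := hT0sub h; simp [Finset.mem_sdiff] at this
    have h1 : (insert i T0).card = c := by
      rw [Finset.card_insert_of_notMem hi, hT0card]; omega
    have h2 : (insert j T0).card = c := by
      rw [Finset.card_insert_of_notMem hj, hT0card]; omega
    have key : (Pi.single i 1 : Fin M → ℝ) - Pi.single j 1 =
        (fun z => if z ∈ insert i T0 then (1:ℝ) else 0) -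
        (fun z => if z ∈ insert j T0 then (1:ℝ) else 0) := by
      funext z
      simp only [Pi.sub_apply, Pi.single_apply, Finset.mem_insert]
      by_cases hzi : z = i
      · have e1 : ¬ z = j := by rw [hzi]; exact hij
        have e2 : z ∉ T0 := by rw [hzi]; exact hi
        simp [hzi, e1, e2, hij, hi]
      · by_cases hzj : z = j
        · have e2 : z ∉ T0 := by rw [hzj]; exact hj
          simp [hzi, hzj, e2, Ne.symm hij, hj]
        · by_cases hz : z ∈ T0 <;> simp [hzi, hzj, hz]
    rw [key]
    exact sub_mem (subset_span (hind _ h1)) (subset_span (hind _ h2))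
  have hsingle : ∀ i : Fin M, (Pi.single i 1 : Fin M → ℝ) ∈ Submodule.span ℝ S := by
    intro i
    have hcard : c - 1 ≤ (Finset.univ \ {i} : Finset (Fin M)).card := by
      rw [Finset.card_sdiff_of_subset (Finset.subset_univ _), Finset.card_univ, Fintype.card_fin,
        Finset.card_singleton]
      omega
    obtain ⟨T0, hT0sub, hT0card⟩ := Finset.exists_subset_card_eq hcard
    have hi : i ∉ T0 := fun h => by
      have := hT0sub h; simp [Finset.mem_sdiff] at this
    set T : Finset (Fin M) := insert i T0 with hTdef
    have hT : T.card = c := by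
      rw [hTdef, Finset.card_insert_of_notMem hi, hT0card]; omega
    have hsum : ∑ t ∈ T, (Pi.single t 1 : Fin M → ℝ) =
        fun z => if z ∈ T then (1:ℝ) else 0 := by
      funext z
      rw [Finset.sum_apply]
      simp only [Pi.single_apply]
      exact Finset.sum_ite_eq T z (fun _ => (1:ℝ))
    have hns : ∑ _t ∈ T, (Pi.single i 1 : Fin M → ℝ) = (c:ℝ) • (Pi.single i 1 : Fin M → ℝ) := by
      rw [Finset.sum_const, hT, ← Nat.cast_smul_eq_nsmul ℝ]
    have key : (c:ℝ) • (Pi.single i 1 : Fin M → ℝ) =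
        (fun z => if z ∈ T then (1:ℝ) else 0) -
          ∑ t ∈ T, ((Pi.single t 1 : Fin M → ℝ) - Pi.single i 1) := by
      rw [Finset.sum_sub_distrib, hsum, hns, sub_sub_cancel]
    have hmem : (c:ℝ) • (Pi.single i 1 : Fin M → ℝ) ∈ Submodule.span ℝ S := by
      rw [key]
      refine sub_mem (subset_span (hind _ hT)) (sum_mem fun t _ => ?_)
      by_cases hti : t = i
      · subst hti; simp only [sub_self]; exact zero_mem _
      · exact hswap t i hti
    have hc0 : (c:ℝ) ≠ 0 := Nat.cast_ne_zero.mpr (by omega)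
    have := Submodule.smul_mem (Submodule.span ℝ S) (c:ℝ)⁻¹ hmem
    rwa [inv_smul_smul₀ hc0] at this
  rw [eq_top_iff, ← (Pi.basisFun ℝ (Fin M)).span_eq]
  refine span_le.mpr ?_
  rintro _ ⟨i, rfl⟩
  rw [Pi.basisFun_apply]
  exact hsingle i

/-- For M ≥ 2 and nonincreasing row sums M-1 ≥ I₁ ≥ ⋯ ≥ I_M ≥ 1, there is an
invertible M×M real matrix with entries in {0,1} having exactly I_k ones in row k. -/
theorem stmt_3 (M : ℕ) (hM : 2 ≤ M) (I : Fin M → ℕ)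
    (hmono : ∀ k l : Fin M, k ≤ l → I l ≤ I k)
    (hub : ∀ k, I k ≤ M - 1) (hlb : ∀ k, 1 ≤ I k) :
    ∃ B : Matrix (Fin M) (Fin M) ℝ, B.det ≠ 0 ∧
      (∀ k z, B k z = 0 ∨ B k z = 1) ∧
      (∀ k, (Finset.univ.filter (fun z => B k z = 1)).card = I k) := by
  -- greedy construction of linearly independent rows
  have main : ∀ n : ℕ, (hn : n ≤ M) → ∃ v : Fin n → (Fin M → ℝ),
      LinearIndependent ℝ v ∧
      ∀ k : Fin n, (∀ z, v k z = 0 ∨ v k z = 1) ∧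
        (Finset.univ.filter (fun z => v k z = 1)).card
          = I ⟨k.1, lt_of_lt_of_le k.isLt hn⟩ := by
    intro n
    induction n with
    | zero =>
      exact fun _ => ⟨fun k => k.elim0, linearIndependent_empty_type, fun k => k.elim0⟩
    | succ n ih =>
      intro hn
      obtain ⟨v, hv, hprop⟩ := ih (by omega)
      have hlt : n < M := by omega
      have hcM : I ⟨n, hlt⟩ < M := by
        have := hub ⟨n, hlt⟩; omega
      have hspan := span_weight_top M (I ⟨n, hlt⟩) (hlb ⟨n, hlt⟩) hcM
      have hne : Submodule.span ℝ (Set.range v) ≠ ⊤ := by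
        intro h
        have h1 : finrank ℝ (Submodule.span ℝ (Set.range v)) ≤ n :=
          (finrank_range_le_card v).trans (by simp)
        rw [h, finrank_top, Module.finrank_fin_fun] at h1
        omega
      have hnot : ¬ ({w : Fin M → ℝ | (∀ z, w z = 0 ∨ w z = 1) ∧
          (Finset.univ.filter (fun z => w z = 1)).card = I ⟨n, hlt⟩}
            ⊆ (Submodule.span ℝ (Set.range v) : Set (Fin M → ℝ))) := by
        intro hsub
        exact hne (top_unique (hspan ▸ span_le.mpr hsub))
      obtain ⟨x, hxS, hxnot⟩ := Set.not_subset.mp hnot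
      refine ⟨Fin.snoc v x, linearIndependent_fin_snoc.mpr ⟨hv, hxnot⟩, ?_⟩
      intro k
      refine Fin.lastCases ?_ ?_ k
      · simp only [Fin.snoc_last]
        exact ⟨hxS.1, hxS.2⟩
      · intro j
        simp only [Fin.snoc_castSucc]
        exact hprop j
  obtain ⟨v, hv, hprop⟩ := main M le_rfl
  refine ⟨Matrix.of v, ?_, fun k z => (hprop k).1 z, fun k => ?_⟩
  · have hunit : IsUnit (Matrix.of v) :=
      Matrix.linearIndependent_rows_iff_isUnit.mp hv
    have := (Matrix.isUnit_iff_isUnit_det _).mp hunit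
    exact this.ne_zero
  · exact (hprop k).2
end

section
/- Let P be the orthogonal projection onto an N-dimensional subspace W ⊆ ℝ^M and let x, y ∈ ℝ^M. Then ‖Px‖ = ‖Py‖ if and only if there exists an orthonormal basis {φ_1,...,φ_N} of W such that |⟨x,φ_n⟩| = |⟨y,φ_n⟩| for all n = 1,...,N. -/
/-!
If `‖u‖ = ‖v‖` with `u ≠ v`, then `u - v` is orthogonal to `u + v`. Completing the unit vector
along `u - v` to an orthonormal basis, every basis vector is orthogonal either to `u - v` (so `u`
and `v` have equal coordinates there) or to `u + v` (so the coordinates are opposite). Conversely,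
equal absolute coordinates in an orthonormal basis give equal norms by Parseval. Applied in `W` to
`u = Px`, `v = Py`, this is the theorem, since `⟪x, φ⟫ = ⟪Px, φ⟫` for `φ ∈ W`.
-/

open RealInnerProductSpace Module

theorem Submodule.span_range_coe_eq_iff {R M ι : Type*} [Semiring R] [AddCommMonoid M]
    [Module R M] {K : Submodule R M} (ψ : ι → K) :
    span R (Set.range fun i => (ψ i : M)) = K ↔ span R (Set.range ψ) = ⊤ := by
  have hrange : (Set.range fun i => (ψ i : M)) = K.subtype '' Set.range ψ := Set.range_comp _ _
  rw [hrange, span_image]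
  exact (map_injective_of_injective K.injective_subtype).eq_iff' K.map_subtype_top

section

variable {E : Type*} [NormedAddCommGroup E] [InnerProductSpace ℝ E] {ι : Type*} [Fintype ι]

theorem Orthonormal.exists_orthonormalBasis_coe_eq {K : Submodule ℝ E} {φ : ι → E}
    (hφ : Orthonormal ℝ φ) (hspan : Submodule.span ℝ (Set.range φ) = K) :
    ∃ b : OrthonormalBasis ι ℝ K, ∀ i, (b i : E) = φ i := by
  have hmem : ∀ i, φ i ∈ K := fun i => hspan ▸ Submodule.subset_span (Set.mem_range_self i)
  have htop := (Submodule.span_range_coe_eq_iff (Set.codRestrict φ K hmem)).mp hspan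
  exact ⟨OrthonormalBasis.mk (hφ.codRestrict K hmem) htop.ge, fun i => by simp⟩

theorem abs_inner_eq_abs_inner_of_inner_sub_mul_inner_add_eq_zero {u v z : E}
    (h : ⟪u - v, z⟫ * ⟪u + v, z⟫ = 0) : |⟪u, z⟫| = |⟪v, z⟫| := by
  rw [inner_sub_left, inner_add_left, mul_eq_zero, sub_eq_zero, add_eq_zero_iff_eq_neg] at h
  exact abs_eq_abs.mpr h

theorem OrthonormalBasis.norm_eq_of_abs_inner_eq (b : OrthonormalBasis ι ℝ E) {u v : E}
    (h : ∀ i, |⟪u, b i⟫| = |⟪v, b i⟫|) : ‖u‖ = ‖v‖ := by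
  have hsq : ‖u‖ ^ 2 = ‖v‖ ^ 2 := by
    rw [← b.sum_sq_inner_left, ← b.sum_sq_inner_left]
    exact Finset.sum_congr rfl fun i _ => by rw [← sq_abs, h, sq_abs]
  exact (sq_eq_sq₀ (norm_nonneg _) (norm_nonneg _)).mp hsq

theorem exists_orthonormalBasis_abs_inner_eq [FiniteDimensional ℝ E]
    (hι : finrank ℝ E = Fintype.card ι) {u v : E} (h : ‖u‖ = ‖v‖) :
    ∃ b : OrthonormalBasis ι ℝ E, ∀ i, |⟪u, b i⟫| = |⟪v, b i⟫| := by
  rcases eq_or_ne u v with rfl | huv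
  · exact ⟨(stdOrthonormalBasis ℝ E).reindex (Fintype.equivFinOfCardEq hι.symm).symm,
      fun _ => rfl⟩
  have hd : u - v ≠ 0 := sub_ne_zero.mpr huv
  set w : E := ‖u - v‖⁻¹ • (u - v) with hw
  have : Nontrivial E := nontrivial_of_ne u v huv
  obtain ⟨i₀⟩ : Nonempty ι := Fintype.card_pos_iff.mp (hι ▸ finrank_pos)
  have hon : Orthonormal ℝ (({i₀} : Set ι).domRestrict fun _ => w) :=
    ⟨fun _ => norm_smul_inv_norm hd, Subsingleton.pairwise⟩
  obtain ⟨b, hb⟩ := hon.exists_orthonormalBasis_extension_of_card_eq hι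
  have hb₀ : b i₀ = w := hb i₀ rfl
  refine ⟨b, fun i => abs_inner_eq_abs_inner_of_inner_sub_mul_inner_add_eq_zero ?_⟩
  rcases eq_or_ne i i₀ with rfl | hi
  · refine mul_eq_zero_of_right _ ?_
    rw [hb₀, hw, real_inner_smul_right, (real_inner_add_sub_eq_zero_iff u v).mpr h, mul_zero]
  · refine mul_eq_zero_of_left ?_ _
    have hwi : ⟪w, b i⟫ = 0 := hb₀ ▸ b.orthonormal.2 hi.symm
    rw [hw, real_inner_smul_left] at hwi
    exact (mul_eq_zero.mp hwi).resolve_left (inv_ne_zero (norm_ne_zero_iff.mpr hd))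

theorem norm_eq_norm_iff_exists_orthonormalBasis_abs_inner_eq [FiniteDimensional ℝ E]
    (hι : finrank ℝ E = Fintype.card ι) {u v : E} :
    ‖u‖ = ‖v‖ ↔ ∃ b : OrthonormalBasis ι ℝ E, ∀ i, |⟪u, b i⟫| = |⟪v, b i⟫| :=
  ⟨exists_orthonormalBasis_abs_inner_eq hι, fun ⟨b, hb⟩ => b.norm_eq_of_abs_inner_eq hb⟩

end

theorem stmt_4_general (M N : ℕ) (W : Submodule ℝ (EuclideanSpace ℝ (Fin M)))
    (hW : Module.finrank ℝ W = N) (x y : EuclideanSpace ℝ (Fin M)) :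
    ‖W.orthogonalProjectionOnto x‖ = ‖W.orthogonalProjectionOnto y‖ ↔
    ∃ φ : Fin N → EuclideanSpace ℝ (Fin M), Orthonormal ℝ φ ∧
      Submodule.span ℝ (Set.range φ) = W ∧
      ∀ n, |⟪x, φ n⟫| = |⟪y, φ n⟫| := by
  rw [norm_eq_norm_iff_exists_orthonormalBasis_abs_inner_eq (ι := Fin N) (by simp [hW])]
  constructor
  · rintro ⟨b, hb⟩
    refine ⟨fun n => b n, b.orthonormal.comp_linearIsometry W.subtypeₗᵢ,
      (Submodule.span_range_coe_eq_iff b).mpr b.toBasis.span_eq, fun n => ?_⟩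
    simpa using hb n
  · rintro ⟨φ, hφ, hspan, habs⟩
    obtain ⟨b, hb⟩ := hφ.exists_orthonormalBasis_coe_eq hspan
    exact ⟨b, fun n => by simpa [hb] using habs n⟩

/-- For the orthogonal projection P onto an N-dimensional subspace W ⊆ ℝ^M:
‖Px‖ = ‖Py‖ iff there is an orthonormal basis {φ_n} of W with |⟨x,φ_n⟩| = |⟨y,φ_n⟩| for all n. -/
theorem stmt_4 (M N : ℕ) (hN : 1 ≤ N) (W : Submodule ℝ (EuclideanSpace ℝ (Fin M)))
    (hW : Module.finrank ℝ W = N) (x y : EuclideanSpace ℝ (Fin M)) :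
    ‖W.orthogonalProjectionOnto x‖ = ‖W.orthogonalProjectionOnto y‖ ↔
    ∃ φ : Fin N → EuclideanSpace ℝ (Fin M), Orthonormal ℝ φ ∧
      Submodule.span ℝ (Set.range φ) = W ∧
      ∀ n, |⟪x, φ n⟫| = |⟪y, φ n⟫| :=
  stmt_4_general M N W hW x y
end

section
/- If subspaces W₁,...,W_N of ℝ^M allow phase retrieval, then there exists δ > 0 such that for all x, y ∈ ℝ^M with x ⊥ y, ‖x‖ = 1, and 0 < ‖y‖ ≤ 1, there exists n ∈ {1,...,N} with |‖P_n x‖ − ‖P_n y‖| > δ. -/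
open RealInnerProductSpace

/-! The pairs `(x, y)` with `x ⊥ y`, `‖x‖ = 1`, `‖y‖ ≤ 1` form a compact set. On it some
measurement `|‖P_n x‖ - ‖P_n y‖|` is positive at every point, since otherwise phase retrieval
would give `x = ±y`, and orthogonality would force `x = 0`. By compactness these pointwise
positive values admit a uniform lower bound `δ > 0`. -/

theorem IsCompact.exists_pos_forall_exists_lt {X ι : Type*} [TopologicalSpace X] {K : Set X}
    (hK : IsCompact K) {f : ι → X → ℝ} (hf : ∀ i, Continuous (f i))
    (hpos : ∀ p ∈ K, ∃ i, 0 < f i p) : ∃ δ > 0, ∀ p ∈ K, ∃ i, δ < f i p := by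
  let U : {δ : ℝ // 0 < δ} → Set X := fun δ => ⋃ i, {p | (δ : ℝ) < f i p}
  have hU_open : ∀ δ, IsOpen (U δ) := fun δ =>
    isOpen_iUnion fun i => isOpen_lt continuous_const (hf i)
  have hK_cover : K ⊆ ⋃ δ, U δ := by
    intro p hp
    obtain ⟨i, hi⟩ := hpos p hp
    exact Set.mem_iUnion.2 ⟨⟨f i p / 2, half_pos hi⟩, Set.mem_iUnion.2 ⟨i, half_lt_self hi⟩⟩
  have hU_directed : Directed (· ⊆ ·) U := by
    intro δ₁ δ₂
    exact ⟨⟨min δ₁ δ₂, lt_min δ₁.2 δ₂.2⟩,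
      Set.iUnion_mono fun i p hp =>
        show min (δ₁ : ℝ) δ₂ < f i p from (min_le_left _ _).trans_lt hp,
      Set.iUnion_mono fun i p hp =>
        show min (δ₁ : ℝ) δ₂ < f i p from (min_le_right _ _).trans_lt hp⟩
  have : Nonempty {δ : ℝ // 0 < δ} := ⟨⟨1, one_pos⟩⟩
  obtain ⟨δ, hδ⟩ := hK.elim_directed_cover U hU_open hK_cover hU_directed
  exact ⟨δ, δ.2, fun p hp => Set.mem_iUnion.1 (hδ hp)⟩

theorem eq_zero_of_inner_eq_zero_of_eq_or_eq_neg {𝕜 E : Type*} [RCLike 𝕜]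
    [NormedAddCommGroup E] [InnerProductSpace 𝕜 E] {x y : E} (hxy : inner 𝕜 x y = 0)
    (h : x = y ∨ x = -y) : x = 0 := by
  rcases h with rfl | rfl
  · exact inner_self_eq_zero.1 hxy
  · rw [inner_neg_left, neg_eq_zero, inner_self_eq_zero] at hxy
    exact neg_eq_zero.2 hxy

theorem isCompact_setOf_inner_eq_zero_norm_eq_one_norm_le_one {E : Type*}
    [NormedAddCommGroup E] [InnerProductSpace ℝ E] [ProperSpace E] :
    IsCompact {p : E × E | ⟪p.1, p.2⟫ = 0 ∧ ‖p.1‖ = 1 ∧ ‖p.2‖ ≤ 1} := by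
  refine ((isCompact_closedBall (0 : E) 1).prod
    (isCompact_closedBall (0 : E) 1)).of_isClosed_subset ?_ ?_
  · exact (isClosed_eq continuous_inner continuous_const).inter
      ((isClosed_eq continuous_fst.norm continuous_const).inter
        (isClosed_le continuous_snd.norm continuous_const))
  · rintro p ⟨-, hp₁, hp₂⟩
    simp only [Set.mem_prod, mem_closedBall_zero_iff]
    exact ⟨hp₁.le, hp₂⟩

/-- If subspaces allow phase retrieval, the measurements separate orthogonal pairs
uniformly: there is δ > 0 with |‖P_n x‖ - ‖P_n y‖| > δ for some n, whenever x ⊥ y,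
‖x‖ = 1 and 0 < ‖y‖ ≤ 1. -/
theorem stmt_9 (M N : ℕ) (W : Fin N → Submodule ℝ (EuclideanSpace ℝ (Fin M)))
    (hPR : ∀ x y : EuclideanSpace ℝ (Fin M),
        (∀ n, ‖(W n).orthogonalProjectionOnto x‖ = ‖(W n).orthogonalProjectionOnto y‖) →
        x = y ∨ x = -y) :
    ∃ δ > (0 : ℝ), ∀ x y : EuclideanSpace ℝ (Fin M), ⟪x, y⟫ = 0 → ‖x‖ = 1 →
      0 < ‖y‖ → ‖y‖ ≤ 1 →
      ∃ n, |‖(W n).orthogonalProjectionOnto x‖ - ‖(W n).orthogonalProjectionOnto y‖| > δ := by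
  have hcont : ∀ n, Continuous fun p : EuclideanSpace ℝ (Fin M) × EuclideanSpace ℝ (Fin M) =>
      |‖(W n).orthogonalProjectionOnto p.1‖ - ‖(W n).orthogonalProjectionOnto p.2‖| := fun n =>
    ((((W n).orthogonalProjectionOnto.continuous.comp continuous_fst).norm).sub
      (((W n).orthogonalProjectionOnto.continuous.comp continuous_snd).norm)).abs
  have hpos : ∀ p ∈ {p : EuclideanSpace ℝ (Fin M) × EuclideanSpace ℝ (Fin M) |
      ⟪p.1, p.2⟫ = 0 ∧ ‖p.1‖ = 1 ∧ ‖p.2‖ ≤ 1}, ∃ n,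
      0 < |‖(W n).orthogonalProjectionOnto p.1‖ - ‖(W n).orthogonalProjectionOnto p.2‖| := by
    rintro p ⟨hp, hp₁, -⟩
    by_contra! hall
    have hp₁_zero := eq_zero_of_inner_eq_zero_of_eq_or_eq_neg hp
      (hPR p.1 p.2 fun n => sub_eq_zero.1 (abs_nonpos_iff.1 (hall n)))
    simp [hp₁_zero] at hp₁
  obtain ⟨δ, hδ, hδK⟩ :=
    isCompact_setOf_inner_eq_zero_norm_eq_one_norm_le_one.exists_pos_forall_exists_lt hcont hpos
  exact ⟨δ, hδ, fun x y hxy hx _ hy => hδK (x, y) ⟨hxy, hx, hy⟩⟩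
end

section
/- Let W₁,...,W_N be subspaces of ℝ^M with orthogonal projections P_n that allow phase retrieval. If the identity I lies in span{P₁,...,P_N}, say I = Σ a_n P_n with Σ a_n ≠ 1, then the orthogonal complements {W_n^⊥}_{n=1}^N also allow phase retrieval. -/
/-! Pairing `x = ∑ aₙ Pₙ x` with `x` gives `‖x‖² = ∑ aₙ ‖Pₙ x‖²`; by Pythagoras
`‖Pₙ x‖² = ‖x‖² - ‖Pₙ^⊥ x‖²`, so `(∑ aₙ - 1) ‖x‖² = ∑ aₙ ‖Pₙ^⊥ x‖²`. Since `∑ aₙ ≠ 1`, the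
norms `‖Pₙ^⊥ x‖` determine `‖x‖`, hence also every `‖Pₙ x‖`, and phase retrieval by the
`Wₙ` applies. -/

namespace Submodule

variable {E : Type*} [NormedAddCommGroup E] [InnerProductSpace ℝ E]

theorem norm_orthogonalProjectionOnto_eq_of_norm_eq (K : Submodule ℝ E)
    [K.HasOrthogonalProjection] {x y : E} (hxy : ‖x‖ = ‖y‖)
    (h : ‖Kᗮ.orthogonalProjectionOnto x‖ = ‖Kᗮ.orthogonalProjectionOnto y‖) :
    ‖K.orthogonalProjectionOnto x‖ = ‖K.orthogonalProjectionOnto y‖ := by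
  have hx := K.norm_sq_eq_add_norm_sq_projection x
  have hy := K.norm_sq_eq_add_norm_sq_projection y
  have hsq : ‖K.orthogonalProjectionOnto x‖ ^ 2 = ‖K.orthogonalProjectionOnto y‖ ^ 2 := by
    rw [hxy, h] at hx
    linarith
  exact (pow_left_inj₀ (norm_nonneg _) (norm_nonneg _) two_ne_zero).mp hsq

variable {ι : Type*} [Fintype ι] (K : ι → Submodule ℝ E) [∀ i, (K i).HasOrthogonalProjection]
  {a : ι → ℝ}

theorem norm_sq_eq_sum_mul_norm_sq_orthogonalProjectionOnto
    (hI : ∑ i, a i • (K i).starProjection = ContinuousLinearMap.id ℝ E) (x : E) :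
    ‖x‖ ^ 2 = ∑ i, a i * ‖(K i).orthogonalProjectionOnto x‖ ^ 2 := by
  calc ‖x‖ ^ 2 = inner ℝ ((∑ i, a i • (K i).starProjection) x) x := by
        rw [hI, ContinuousLinearMap.id_apply, real_inner_self_eq_norm_sq]
    _ = ∑ i, a i * ‖(K i).orthogonalProjectionOnto x‖ ^ 2 := by
        simp only [_root_.sum_apply, smul_apply, sum_inner,
          real_inner_smul_left]
        refine Finset.sum_congr rfl fun i _ => ?_
        rw [← (K i).re_inner_starProjection_eq_normSq x, RCLike.re_to_real]

theorem sum_mul_norm_sq_orthogonalProjectionOnto_orthogonal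
    (hI : ∑ i, a i • (K i).starProjection = ContinuousLinearMap.id ℝ E) (x : E) :
    ∑ i, a i * ‖(K i)ᗮ.orthogonalProjectionOnto x‖ ^ 2 = (∑ i, a i - 1) * ‖x‖ ^ 2 := by
  have hpyth (i : ι) : ‖(K i)ᗮ.orthogonalProjectionOnto x‖ ^ 2 =
      ‖x‖ ^ 2 - ‖(K i).orthogonalProjectionOnto x‖ ^ 2 := by
    linarith [(K i).norm_sq_eq_add_norm_sq_projection x]
  have hx := norm_sq_eq_sum_mul_norm_sq_orthogonalProjectionOnto K hI x
  simp only [hpyth, mul_sub, Finset.sum_sub_distrib, ← Finset.sum_mul]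
  linarith

theorem norm_eq_of_norm_orthogonalProjectionOnto_orthogonal_eq
    (hI : ∑ i, a i • (K i).starProjection = ContinuousLinearMap.id ℝ E) (ha : ∑ i, a i ≠ 1)
    {x y : E}
    (h : ∀ i, ‖(K i)ᗮ.orthogonalProjectionOnto x‖ = ‖(K i)ᗮ.orthogonalProjectionOnto y‖) :
    ‖x‖ = ‖y‖ := by
  have hsq : (∑ i, a i - 1) * ‖x‖ ^ 2 = (∑ i, a i - 1) * ‖y‖ ^ 2 := by
    simp only [← sum_mul_norm_sq_orthogonalProjectionOnto_orthogonal K hI, h]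
  have hsq' := mul_left_cancel₀ (sub_ne_zero.mpr ha) hsq
  exact (pow_left_inj₀ (norm_nonneg _) (norm_nonneg _) two_ne_zero).mp hsq'

end Submodule

/-- If subspaces {W_n} allow phase retrieval and the identity is a linear combination
I = Σ a_n P_n of their projections with Σ a_n ≠ 1, then the orthogonal complements
{W_n^⊥} also allow phase retrieval. -/
theorem stmt_11 (M N : ℕ) (W : Fin N → Submodule ℝ (EuclideanSpace ℝ (Fin M)))
    (hPR : ∀ x y : EuclideanSpace ℝ (Fin M),
        (∀ n, ‖(W n).orthogonalProjectionOnto x‖ = ‖(W n).orthogonalProjectionOnto y‖) →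
        x = y ∨ x = -y)
    (a : Fin N → ℝ)
    (hI : ∑ n, a n • (W n).subtypeL.comp ((W n).orthogonalProjectionOnto) =
          ContinuousLinearMap.id ℝ (EuclideanSpace ℝ (Fin M)))
    (ha : ∑ n, a n ≠ 1) :
    ∀ x y : EuclideanSpace ℝ (Fin M),
      (∀ n, ‖(W n)ᗮ.orthogonalProjectionOnto x‖ = ‖(W n)ᗮ.orthogonalProjectionOnto y‖) →
      x = y ∨ x = -y := by
  intro x y h
  have hxy := Submodule.norm_eq_of_norm_orthogonalProjectionOnto_orthogonal_eq W hI ha h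
  exact hPR x y fun n => (W n).norm_orthogonalProjectionOnto_eq_of_norm_eq hxy (h n)
end

section
/- If a family of vectors {φ_n}_{n=1}^N in ℝ^M does not have the complement property, then there exist vectors x, y ∈ ℝ^M with x+y ≠ ±(x−y) (i.e., x ≠ 0 and y ≠ 0) such that |⟨x+y, φ_n⟩| = |⟨x−y, φ_n⟩| for all n = 1,...,N. -/
open RealInnerProductSpace

section

variable {E : Type*} [NormedAddCommGroup E] [InnerProductSpace ℝ E]

lemma abs_inner_add_eq_abs_inner_sub_of_inner_eq_zero {x y v : E}
    (h : ⟪x, v⟫ = 0 ∨ ⟪y, v⟫ = 0) : |⟪x + y, v⟫| = |⟪x - y, v⟫| := by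
  rcases h with h | h <;> simp [inner_add_left, inner_sub_left, h]

lemma exists_ne_zero_forall_inner_eq_zero_of_span_ne_top [FiniteDimensional ℝ E] {s : Set E}
    (h : Submodule.span ℝ s ≠ ⊤) : ∃ x : E, x ≠ 0 ∧ ∀ v ∈ s, ⟪x, v⟫ = 0 := by
  obtain ⟨x, hx, hx0⟩ := Submodule.exists_mem_ne_zero_of_ne_bot
    (mt Submodule.orthogonal_eq_bot_iff.mp h)
  exact ⟨x, hx0, fun v hv => Submodule.inner_left_of_mem_orthogonal (Submodule.subset_span hv) hx⟩

end

/-- If a family of vectors fails the complement property, then there exist x, y, both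
nonzero, with |⟨x+y, φ_n⟩| = |⟨x−y, φ_n⟩| for all n. -/
theorem stmt_16 (M N : ℕ) (φ : Fin N → EuclideanSpace ℝ (Fin M))
    (hcp : ¬ ∀ I : Finset (Fin N),
        Submodule.span ℝ (φ '' (I : Set (Fin N))) = ⊤ ∨
        Submodule.span ℝ (φ '' ((I : Set (Fin N))ᶜ)) = ⊤) :
    ∃ x y : EuclideanSpace ℝ (Fin M), x ≠ 0 ∧ y ≠ 0 ∧
      ∀ n, |⟪x + y, φ n⟫| = |⟪x - y, φ n⟫| := by
  push Not at hcp
  obtain ⟨I, hI, hIc⟩ := hcp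
  obtain ⟨x, hx0, hx⟩ := exists_ne_zero_forall_inner_eq_zero_of_span_ne_top hI
  obtain ⟨y, hy0, hy⟩ := exists_ne_zero_forall_inner_eq_zero_of_span_ne_top hIc
  refine ⟨x, y, hx0, hy0, fun n => abs_inner_add_eq_abs_inner_sub_of_inner_eq_zero ?_⟩
  by_cases hn : n ∈ I
  · exact .inl (hx _ (Set.mem_image_of_mem φ hn))
  · exact .inr (hy _ (Set.mem_image_of_mem φ hn))
end

section
/- Phase retrieval in ℝ^M (M ≥ 2) is possible using 2M−1 subspaces: there exist subspaces W₁,...,W_{2M−1} of ℝ^M, each of dimension at most M−2, whose orthogonal projections P_n make the map x ↦ (‖P_n x‖²)_{n=1}^{2M−1} injective on ℝ^M modulo global sign. Moreover the dimensions of these subspaces can be arbitrarily prescribed below M−1. -/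
/-!
Take the standard basis `e₁, …, e_M` of `ℝ^M` together with orthonormal vectors
`g₁, …, g_{M-1}` such that any `M` of these `2M - 1` vectors are linearly independent (full
spark). The `g`'s are chosen one at a time: a unit vector orthogonal to the previous `g`'s and
outside the finitely many spans of `M - 1` earlier vectors, which is possible because such a
span cannot contain the whole orthogonal complement.

The first `M` subspaces are spanned by subsets of the `e`'s, the last `M - 1` by subsets of the
`g`'s, the subsets being the rows of invertible `0`-`1` matrices with the prescribed row sums.
As `‖P_W x‖²` is the sum of `⟪φ, x⟫²` over the orthonormal vectors `φ` spanning `W`,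
inverting these matrices recovers `⟪φ, x⟫²` for all `2M - 1` vectors. Then each of them is
orthogonal to `x - y` or to `x + y`, so one of `x - y`, `x + y` is orthogonal to `M` of them
and vanishes.
-/

open Module Submodule
open scoped RealInnerProductSpace

section FullSpark

variable {K V ι κ : Type*} [DivisionRing K] [AddCommGroup V] [Module K V]

variable (K) in
/-- For families of at least `finrank K V` vectors this is the usual full spark condition:
any `finrank K V` of them are linearly independent. -/
def IsFullSpark (v : ι → V) : Prop :=
  ∀ s : Finset ι, s.card ≤ finrank K V → LinearIndepOn K v s

theorem LinearIndependent.isFullSpark {v : ι → V} (hv : LinearIndependent K v) :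
    IsFullSpark K v :=
  fun _ _ => hv.linearIndepOn _

theorem IsFullSpark.comp_injective {v : ι → V} (hv : IsFullSpark K v) {f : κ → ι}
    (hf : f.Injective) : IsFullSpark K (v ∘ f) := by
  classical
  intro s hs
  refine LinearIndepOn.comp_of_image ?_ hf.injOn
  rw [← Finset.coe_image]
  exact hv _ (Finset.card_image_le.trans hs)

theorem IsFullSpark.optionElim {v : ι → V} (hv : IsFullSpark K v) {u : V}
    (hu : ∀ s : Finset ι, s.card < finrank K V → u ∉ span K (v '' s)) :
    IsFullSpark K (fun o : Option ι => o.elim u v) := by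
  classical
  intro s hs
  set t := Finset.eraseNone s
  have ht : t.card = (s.erase none).card := by
    rw [← Finset.image_some_eraseNone, Finset.card_image_of_injective _ (Option.some_injective _)]
  have hindep : t.card ≤ finrank K V →
      LinearIndepOn K (fun o : Option ι => o.elim u v) (some '' t) :=
    fun h => (hv t h).image_of_comp some _
  by_cases hnone : none ∈ s
  · have hlt : t.card < finrank K V := by
      have := Finset.card_pos.2 ⟨none, hnone⟩
      rw [ht, Finset.card_erase_of_mem hnone]; omega
    rw [← Finset.insert_erase hnone, Finset.coe_insert, ← Finset.image_some_eraseNone,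
      Finset.coe_image, linearIndepOn_insert (by simp), Set.image_image]
    exact ⟨hindep hlt.le, hu t hlt⟩
  · rw [← Finset.erase_eq_of_notMem hnone, ← Finset.image_some_eraseNone, Finset.coe_image]
    exact hindep (by rw [ht, Finset.erase_eq_of_notMem hnone]; exact hs)

theorem IsFullSpark.span_image_eq_top [FiniteDimensional K V] {v : ι → V} (hv : IsFullSpark K v)
    {s : Finset ι} (hs : s.card = finrank K V) : span K (v '' s) = ⊤ := by
  refine eq_top_of_finrank_eq ?_
  rw [Set.image_eq_range, finrank_span_eq_card (hv s hs.le)]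
  simpa using hs

end FullSpark

section InnerProduct

variable {α ι E : Type*} [NormedAddCommGroup E] [InnerProductSpace ℝ E]

theorem IsFullSpark.eq_zero_of_inner_eq_zero [FiniteDimensional ℝ E] {φ : ι → E}
    (hφ : IsFullSpark ℝ φ) {s : Finset ι} (hs : finrank ℝ E ≤ s.card) {z : E}
    (hz : ∀ i ∈ s, ⟪φ i, z⟫ = 0) : z = 0 := by
  obtain ⟨t, hts, ht⟩ := Finset.exists_subset_card_eq hs
  have hortho : span ℝ (φ '' t) ⟂ span ℝ {z} := isOrtho_span.2 <| by
    rintro _ ⟨i, hi, rfl⟩ _ rfl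
    exact hz i (hts hi)
  have hzt : z ∈ (span ℝ (φ '' t))ᗮ := hortho.symm (mem_span_singleton_self z)
  rwa [hφ.span_image_eq_top ht, top_orthogonal_eq_bot, mem_bot] at hzt

theorem IsFullSpark.eq_or_eq_neg_of_inner_sq_eq [FiniteDimensional ℝ E] [Fintype ι]
    {φ : ι → E} (hφ : IsFullSpark ℝ φ) (hι : 2 * finrank ℝ E - 1 ≤ Fintype.card ι)
    {x y : E}
    (hxy : ∀ i, ⟪φ i, x⟫ ^ 2 = ⟪φ i, y⟫ ^ 2) : x = y ∨ x = -y := by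
  classical
  set s := Finset.univ.filter fun i => ⟪φ i, x - y⟫ = 0
  have hsc : ∀ i ∈ sᶜ, ⟪φ i, x + y⟫ = 0 := by
    intro i hi
    have hprod : ⟪φ i, x - y⟫ * ⟪φ i, x + y⟫ = 0 := by
      rw [inner_sub_right, inner_add_right]
      linear_combination hxy i
    exact (mul_eq_zero.1 hprod).resolve_left (by simpa [s] using hi)
  have hcard := s.card_add_card_compl
  rcases le_or_gt (finrank ℝ E) s.card with hs | hs
  · exact .inl (sub_eq_zero.1 (hφ.eq_zero_of_inner_eq_zero hs (by simp [s])))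
  · exact .inr (eq_neg_of_add_eq_zero_left (hφ.eq_zero_of_inner_eq_zero (by omega) hsc))

theorem Orthonormal.mem_span_image_compl {w : α → E} (hw : Orthonormal ℝ w) {z : E}
    (hz : z ∈ span ℝ (Set.range w)) {T : Set α} (hT : ∀ i ∈ T, ⟪w i, z⟫ = 0) :
    z ∈ span ℝ (w '' Tᶜ) := by
  rw [← Set.image_univ, Finsupp.mem_span_image_iff_linearCombination] at hz
  obtain ⟨l, -, rfl⟩ := hz
  refine (Finsupp.mem_span_image_iff_linearCombination ℝ).2 ⟨l, ?_, rfl⟩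
  rw [Finsupp.mem_supported]
  intro i hi hiT
  exact Finsupp.mem_support_iff.1 hi (by rw [← hw.inner_right_finsupp]; exact hT i hiT)

theorem Orthonormal.optionElim {g : ι → E} (hg : Orthonormal ℝ g) {u : E} (hu : ‖u‖ = 1)
    (hug : ∀ i, ⟪g i, u⟫ = 0) : Orthonormal ℝ (fun o : Option ι => o.elim u g) := by
  refine ⟨by rintro (_ | i) <;> simp [hu, hg.1], ?_⟩
  rintro (_ | i) (_ | j) hij
  · exact absurd rfl hij
  · exact (real_inner_comm _ _).trans (hug j)
  · exact hug i
  · exact hg.2 fun h => hij (congrArg some h)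

theorem Orthonormal.finrank_span_image {w : α → E} (hw : Orthonormal ℝ w) (s : Finset α) :
    finrank ℝ (span ℝ (w '' s)) = s.card := by
  rw [Set.image_eq_range, finrank_span_eq_card (hw.linearIndependent.linearIndepOn _)]
  simp

theorem Orthonormal.norm_orthogonalProjectionOnto_span_sq [FiniteDimensional ℝ E] {w : α → E}
    (hw : Orthonormal ℝ w) (s : Finset α) (x : E) :
    ‖(span ℝ (w '' s)).orthogonalProjectionOnto x‖ ^ 2 = ∑ i ∈ s, ⟪w i, x⟫ ^ 2 := by
  classical
  let c := (OrthonormalBasis.span hw s).map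
    (LinearIsometryEquiv.ofEq _ _ (by rw [Finset.coe_image]))
  rw [← c.sum_sq_inner_right, ← Finset.sum_coe_sort s]
  refine Finset.sum_congr rfl fun i _ => ?_
  rw [inner_orthogonalProjectionOnto_eq_of_mem_left]
  simp [c]

end InnerProduct

section Construction

variable {ι κ E : Type*} [Fintype ι] [Fintype κ] [NormedAddCommGroup E]
  [InnerProductSpace ℝ E] [FiniteDimensional ℝ E]

theorem not_orthogonal_span_le_span_image (b : OrthonormalBasis ι ℝ E) {g : κ → E}
    (hg : Orthonormal ℝ g) (hφ : IsFullSpark ℝ (Sum.elim b g))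
    (hκ : Fintype.card κ < finrank ℝ E) {s : Finset (ι ⊕ κ)} (hs : s.card < finrank ℝ E) :
    ¬ (span ℝ (Set.range g))ᗮ ≤ span ℝ (Sum.elim b g '' s) := by
  classical
  -- With `t ⊇ s` of `M - 1` indices, a nonzero `z ∈ Uᗮ ≤ span g` lies both in the span of the
  -- `b`'s outside `t` and in that of the `g`'s outside `t`. These are `card κ + 1 ≤ M` vectors of
  -- the family, so full spark makes the two spans meet only in `0`.
  intro hle
  set M := finrank ℝ E
  have hι : Fintype.card ι = M := (finrank_eq_card_basis b.toBasis).symm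
  obtain ⟨t, hst, ht⟩ := Finset.exists_superset_card_eq (s := s) (n := M - 1) (by omega)
    (by simp only [Fintype.card_sum]; omega)
  set U := span ℝ (Sum.elim b g '' t)
  have hUg : Uᗮ ≤ span ℝ (Set.range g) := by
    simpa only [orthogonal_orthogonal] using
      orthogonal_le (hle.trans (span_mono (Set.image_mono hst)))
  obtain ⟨z, hzU, hz⟩ : ∃ z ∈ Uᗮ, z ≠ 0 := by
    refine exists_mem_ne_zero_of_ne_bot fun hbot => ?_
    have hU : finrank ℝ U ≤ M - 1 := by
      rw [← ht, show U = span ℝ ↑(t.image (Sum.elim b g)) by rw [Finset.coe_image]]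
      exact (finrank_span_finset_le_card (t.image _)).trans Finset.card_image_le
    have := U.finrank_add_finrank_orthogonal
    rw [hbot, finrank_bot] at this
    omega
  have hzt : ∀ i ∈ t, ⟪Sum.elim b g i, z⟫ = 0 := fun i hi =>
    inner_right_of_mem_orthogonal (K := U) (subset_span ⟨i, hi, rfl⟩) hzU
  have hzb : z ∈ span ℝ (b '' {i | Sum.inl i ∈ t}ᶜ) :=
    b.orthonormal.mem_span_image_compl (by rw [← b.coe_toBasis, b.toBasis.span_eq]; trivial)
      fun i hi => hzt _ hi
  have hzg : z ∈ span ℝ (g '' {k | Sum.inr k ∈ t}ᶜ) :=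
    hg.mem_span_image_compl (hUg hzU) fun k hk => hzt _ hk
  have hindep : LinearIndepOn ℝ (Sum.elim b g)
      (Sum.inl '' {i | Sum.inl i ∈ t}ᶜ ∪ Sum.inr '' {k | Sum.inr k ∈ t}ᶜ) := by
    refine (hφ tᶜ ?_).mono ?_
    · rw [Finset.card_compl, Fintype.card_sum]; omega
    · rintro _ (⟨i, hi, rfl⟩ | ⟨k, hk, rfl⟩)
      · simpa using hi
      · simpa using hk
  have hdisj := ((linearIndepOn_union_iff (Set.isCompl_range_inl_range_inr.disjoint.mono
    (Set.image_subset_range _ _) (Set.image_subset_range _ _))).1 hindep).2.2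
  rw [Set.image_image, Set.image_image] at hdisj
  exact hz (disjoint_def.1 hdisj z hzb hzg)

theorem exists_unit_orthogonal_forall_notMem_span (b : OrthonormalBasis ι ℝ E) {g : κ → E}
    (hg : Orthonormal ℝ g) (hφ : IsFullSpark ℝ (Sum.elim b g))
    (hκ : Fintype.card κ < finrank ℝ E) :
    ∃ u : E, ‖u‖ = 1 ∧ (∀ k, ⟪g k, u⟫ = 0) ∧ ∀ s : Finset (ι ⊕ κ),
      s.card < finrank ℝ E → u ∉ span ℝ (Sum.elim b g '' s) := by
  set V := (span ℝ (Set.range g))ᗮ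
  obtain ⟨⟨v, hvV⟩, hv⟩ := exists_forall_notMem_of_forall_ne_top
    (fun s : {s : Finset (ι ⊕ κ) // s.card < finrank ℝ E} =>
      (span ℝ (Sum.elim b g '' s)).comap V.subtype)
    fun s => by
      rw [Ne, comap_subtype_eq_top]
      exact not_orthogonal_span_le_span_image b hg hφ hκ s.2
  replace hv (s : Finset (ι ⊕ κ)) (hs : s.card < finrank ℝ E) :
      v ∉ span ℝ (Sum.elim b g '' s) :=
    hv ⟨s, hs⟩
  have hv0 : v ≠ 0 := by
    rintro rfl
    exact hv ∅ (by rw [Finset.card_empty]; omega) (zero_mem _)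
  refine ⟨‖v‖⁻¹ • v, ?_, fun k => ?_, fun s hs => ?_⟩
  · rw [norm_smul, norm_inv, norm_norm, inv_mul_cancel₀ (norm_ne_zero_iff.2 hv0)]
  · rw [real_inner_smul_right, mul_eq_zero]
    exact .inr <| inner_right_of_mem_orthogonal (K := span ℝ (Set.range g))
      (subset_span ⟨k, rfl⟩) hvV
  · rw [smul_mem_iff _ (inv_ne_zero (norm_ne_zero_iff.2 hv0))]
    exact hv s hs

theorem exists_orthonormal_isFullSpark_sumElim (b : OrthonormalBasis ι ℝ E)
    (hκ : Fintype.card κ ≤ finrank ℝ E) :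
    ∃ g : κ → E, Orthonormal ℝ g ∧ IsFullSpark ℝ (Sum.elim b g) := by
  revert hκ
  refine Fintype.induction_empty_option
    (P := fun α [Fintype α] => Fintype.card α ≤ finrank ℝ E →
      ∃ g : α → E, Orthonormal ℝ g ∧ IsFullSpark ℝ (Sum.elim b g))
    ?of_equiv ?h_empty ?h_option κ
  case of_equiv =>
    intro α β _ e ih hκ
    let := Fintype.ofEquiv β e.symm
    obtain ⟨g, hg, hφ⟩ := ih ((Fintype.card_congr e).trans_le hκ)
    refine ⟨g ∘ e.symm, hg.comp _ e.symm.injective, ?_⟩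
    simpa only [Sum.elim_comp_map, Function.comp_id] using
      hφ.comp_injective (Sum.map_injective.2 ⟨Function.injective_id, e.symm.injective⟩)
  case h_empty =>
    intro _
    refine ⟨PEmpty.elim, ⟨fun i => i.elim, fun i => i.elim⟩, ?_⟩
    have hinj : (Sum.elim id PEmpty.elim : ι ⊕ PEmpty → ι).Injective :=
      Function.injective_id.sumElim (fun x => x.elim) fun _ x => x.elim
    convert b.orthonormal.linearIndependent.isFullSpark.comp_injective hinj using 1
    ext (i | x)
    · rfl
    · exact x.elim
  case h_option =>
    intro α _ ih hκ
    rw [Fintype.card_option] at hκ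
    obtain ⟨g, hg, hφ⟩ := ih (by omega)
    obtain ⟨u, hu, hug, hus⟩ := exists_unit_orthogonal_forall_notMem_span b hg hφ (by omega)
    refine ⟨fun o => o.elim u g, hg.optionElim hu hug, ?_⟩
    have hinj : (Sum.elim (some ∘ Sum.inl) (Option.map Sum.inr) :
        ι ⊕ Option α → Option (ι ⊕ α)).Injective :=
      (Option.some_injective _ |>.comp Sum.inl_injective).sumElim
        (Option.map_injective Sum.inr_injective) (by rintro i (_ | k) <;> simp)
    convert (hφ.optionElim hus).comp_injective hinj using 1
    ext (i | _ | k) <;> rfl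

end Construction

section ZeroOneMatrix

variable {K V : Type*}

theorem exists_linearIndependent_of_forall_span_eq_top [DivisionRing K] [AddCommGroup V]
    [Module K V] {n : ℕ} (A : Fin n → Set V) (hA : ∀ i, span K (A i) = ⊤)
    (hn : n ≤ finrank K V) :
    ∃ f : Fin n → V, (∀ i, f i ∈ A i) ∧ LinearIndependent K f := by
  induction n with
  | zero => exact ⟨Fin.elim0, fun i => i.elim0, linearIndependent_empty_type⟩
  | succ n ih =>
    obtain ⟨f, hfA, hf⟩ := ih (fun i => A i.castSucc) (fun i => hA _) (by omega)
    have hlt : span K (Set.range f) ≠ ⊤ := fun h => by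
      have := finrank_range_le_card (R := K) f
      rw [Set.finrank, h, finrank_top, Fintype.card_fin] at this
      omega
    obtain ⟨x, hxA, hx⟩ : ∃ x ∈ A (Fin.last n), x ∉ span K (Set.range f) := by
      by_contra! h
      exact hlt (eq_top_iff.2 ((hA (Fin.last n)).ge.trans (span_le.2 h)))
    refine ⟨Fin.snoc f x, Fin.lastCases ?_ fun i => ?_,
      linearIndependent_finSnoc.2 ⟨hf, hx⟩⟩
    · simpa using hxA
    · simpa using hfA i

variable [Field K] [CharZero K]

theorem span_indicator_card_eq_eq_top {ι : Type*} [Fintype ι] {r : ℕ} (hr₀ : 1 ≤ r)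
    (hr : r < Fintype.card ι) :
    span K {v : ι → K | ∃ T : Finset ι, T.card = r ∧ (T : Set ι).indicator 1 = v} =
      ⊤ := by
  classical
  set U := span K {v : ι → K | ∃ T : Finset ι, T.card = r ∧ (T : Set ι).indicator 1 = v}
  have hsingle : ∀ j, Pi.single j 1 ∈ U := by
    intro j
    obtain ⟨T, hTj, hT⟩ := Finset.exists_subset_card_eq (s := Finset.univ.erase j) (n := r)
      (by rw [Finset.card_erase_of_mem (Finset.mem_univ j), Finset.card_univ]; omega)
    have hjT : j ∉ T := fun h => by simpa using hTj h
    have hswap : ∀ i ∈ T,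
        ((insert j (T.erase i) : Finset ι) : Set ι).indicator (1 : ι → K) =
          (T : Set ι).indicator 1 - Pi.single i 1 + Pi.single j 1 := by
      intro i hi
      ext k
      by_cases hkj : k = j <;> by_cases hki : k = i <;>
        simp_all [Set.indicator_apply]
    have hsum : ∑ i ∈ T, ((insert j (T.erase i) : Finset ι) : Set ι).indicator (1 : ι → K)
        = ((r : K) - 1) • (T : Set ι).indicator 1 + (r : K) • Pi.single j 1 := by
      have hT1 : ∑ i ∈ T, Pi.single i (1 : K) = (T : Set ι).indicator 1 := by
        ext k
        simp [Finset.sum_apply, Set.indicator_apply, Pi.single_apply]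
      rw [Finset.sum_congr rfl hswap, Finset.sum_add_distrib, Finset.sum_sub_distrib, hT1,
        Finset.sum_const, Finset.sum_const, hT, ← Nat.cast_smul_eq_nsmul K,
        ← Nat.cast_smul_eq_nsmul K]
      module
    have hmem : (r : K) • Pi.single j (1 : K) ∈ U := by
      have h₁ : ∑ i ∈ T, ((insert j (T.erase i) : Finset ι) : Set ι).indicator 1 ∈ U :=
        sum_mem fun i hi => subset_span ⟨_, by
          rw [Finset.card_insert_of_notMem fun h => hjT (Finset.mem_of_mem_erase h),
            Finset.card_erase_of_mem hi]
          omega, rfl⟩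
      have h₂ : (T : Set ι).indicator (1 : ι → K) ∈ U := subset_span ⟨T, hT, rfl⟩
      convert sub_mem h₁ (smul_mem U ((r : K) - 1) h₂) using 1
      rw [hsum]
      abel
    exact (smul_mem_iff U (Nat.cast_ne_zero.2 (by omega) : (r : K) ≠ 0)).1 hmem
  refine eq_top_iff.2 ((Pi.basisFun K ι).span_eq.ge.trans (span_le.2 ?_))
  rintro _ ⟨j, rfl⟩
  simpa using hsingle j

theorem exists_isUnit_indicator_matrix {N : ℕ} (r : Fin N → ℕ)
    (hr : ∀ i, 1 ≤ r i ∧ r i < N) :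
    ∃ S : Fin N → Finset (Fin N), (∀ i, (S i).card = r i) ∧
      IsUnit (Matrix.of fun i => ((S i : Set (Fin N)).indicator 1 : Fin N → K)) := by
  obtain ⟨f, hfA, hf⟩ := exists_linearIndependent_of_forall_span_eq_top
    (fun i => {v : Fin N → K |
      ∃ T : Finset (Fin N), T.card = r i ∧ (T : Set (Fin N)).indicator 1 = v})
    (fun i => span_indicator_card_eq_eq_top (hr i).1 (by simpa using (hr i).2)) (by simp)
  choose S hS hSf using hfA
  refine ⟨S, hS, Matrix.linearIndependent_rows_iff_isUnit.1 ?_⟩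
  rwa [show (Matrix.of fun i => ((S i : Set (Fin N)).indicator 1 : Fin N → K)).row = f from
    funext hSf]

end ZeroOneMatrix

theorem Orthonormal.exists_finsets_inner_sq_eq_of_norm_sq_eq {E : Type*} [NormedAddCommGroup E]
    [InnerProductSpace ℝ E] [FiniteDimensional ℝ E] {N : ℕ} {w : Fin N → E}
    (hw : Orthonormal ℝ w) (r : Fin N → ℕ) (hr : ∀ i, 1 ≤ r i ∧ r i < N) :
    ∃ S : Fin N → Finset (Fin N), (∀ i, (S i).card = r i) ∧ ∀ x y : E,
      (∀ i, ‖(span ℝ (w '' S i)).orthogonalProjectionOnto x‖ ^ 2 =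
        ‖(span ℝ (w '' S i)).orthogonalProjectionOnto y‖ ^ 2) →
      ∀ j, ⟪w j, x⟫ ^ 2 = ⟪w j, y⟫ ^ 2 := by
  obtain ⟨S, hS, hA⟩ := exists_isUnit_indicator_matrix (K := ℝ) r hr
  refine ⟨S, hS, fun x y hxy => congrFun (Matrix.mulVec_injective_iff_isUnit.2 hA ?_)⟩
  ext i
  have := hxy i
  rw [hw.norm_orthogonalProjectionOnto_span_sq, hw.norm_orthogonalProjectionOnto_span_sq] at this
  simpa [Matrix.mulVec, dotProduct, Set.indicator_apply] using this

/-- Phase retrieval in ℝ^M is possible with 2M-1 subspaces of arbitrarily prescribed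
dimensions below M-1. -/
theorem stmt_18 (M : ℕ) (hM : 2 ≤ M) (d : Fin (2 * M - 1) → ℕ)
    (hd : ∀ n, 1 ≤ d n ∧ d n < M - 1) :
    ∃ W : Fin (2 * M - 1) → Submodule ℝ (EuclideanSpace ℝ (Fin M)),
      (∀ n, Module.finrank ℝ (W n) = d n) ∧
      ∀ x y : EuclideanSpace ℝ (Fin M),
        (∀ n, ‖(W n).orthogonalProjectionOnto x‖ ^ 2 = ‖(W n).orthogonalProjectionOnto y‖ ^ 2) →
        x = y ∨ x = -y := by
  have hM3 : 3 ≤ M := by have := hd ⟨0, by omega⟩; omega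
  let b := EuclideanSpace.basisFun (Fin M) ℝ
  let e : Fin M ⊕ Fin (M - 1) ≃ Fin (2 * M - 1) := finSumFinEquiv.trans (finCongr (by omega))
  obtain ⟨g, hg, hφ⟩ := exists_orthonormal_isFullSpark_sumElim (κ := Fin (M - 1)) b (by simp)
  obtain ⟨S, hScard, hS⟩ := b.orthonormal.exists_finsets_inner_sq_eq_of_norm_sq_eq
    (fun i => d (e (.inl i))) fun i => ⟨(hd _).1, by have := hd (e (.inl i)); omega⟩
  obtain ⟨T, hTcard, hT⟩ := hg.exists_finsets_inner_sq_eq_of_norm_sq_eq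
    (fun j => d (e (.inr j))) fun j => hd _
  let W := Sum.elim (fun i => span ℝ (b '' S i)) (fun j => span ℝ (g '' T j))
  have hW : ∀ k, finrank ℝ (W k) = d (e k) := by
    rintro (i | j)
    · exact (b.orthonormal.finrank_span_image _).trans (hScard i)
    · exact (hg.finrank_span_image _).trans (hTcard j)
  refine ⟨fun n => W (e.symm n), fun n => (hW _).trans (congrArg d (e.apply_symm_apply n)),
    fun x y hxy => hφ.eq_or_eq_neg_of_inner_sq_eq ?_ ?_⟩
  · rw [Fintype.card_sum, Fintype.card_fin, Fintype.card_fin, finrank_euclideanSpace_fin]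
    omega
  have hWxy : ∀ k, ‖(W k).orthogonalProjectionOnto x‖ ^ 2 =
      ‖(W k).orthogonalProjectionOnto y‖ ^ 2 := by
    intro k
    obtain ⟨n, rfl⟩ := e.symm.surjective k
    exact hxy n
  rintro (i | j)
  · exact hS x y (fun i => hWxy (.inl i)) i
  · exact hT x y (fun j => hWxy (.inr j)) j
end

section
/- If vectors u, v lie in a 2-dimensional real inner product space Z, then there exists a nonzero z₀ ∈ Z with |⟨u,z₀⟩| = |⟨v,z₀⟩|. -/
/-! No intermediate value argument is needed: any nonzero `z` orthogonal to `u - v` has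
`⟪u, z⟫ = ⟪v, z⟫`, and such a `z` exists because a line has a nonzero orthogonal complement
in dimension at least two. -/

open RealInnerProductSpace

theorem exists_ne_zero_inner_eq_zero {𝕜 E : Type*} [RCLike 𝕜] [NormedAddCommGroup E]
    [InnerProductSpace 𝕜 E] (h : 1 < Module.finrank 𝕜 E) (w : E) :
    ∃ z : E, z ≠ 0 ∧ inner 𝕜 w z = 0 := by
  have : FiniteDimensional 𝕜 E := Module.finite_of_finrank_pos (by omega)
  have hspan : Module.finrank 𝕜 (𝕜 ∙ w) ≤ 1 := (finrank_span_le_card {w}).trans (by simp)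
  have hsum := (𝕜 ∙ w).finrank_add_finrank_orthogonal
  have hne : (𝕜 ∙ w)ᗮ ≠ ⊥ := by
    intro hbot
    rw [hbot, finrank_bot] at hsum
    omega
  obtain ⟨z, hz, hz0⟩ := Submodule.exists_mem_ne_zero_of_ne_bot hne
  exact ⟨z, hz0, Submodule.inner_right_of_mem_orthogonal (Submodule.mem_span_singleton_self w) hz⟩

/-- In a 2-dimensional real inner product space, for any u, v there is a nonzero z₀ with
|⟨u,z₀⟩| = |⟨v,z₀⟩|. -/
theorem stmt_19 (Z : Type*) [NormedAddCommGroup Z] [InnerProductSpace ℝ Z]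
    (hZ : Module.finrank ℝ Z = 2) (u v : Z) :
    ∃ z₀ : Z, z₀ ≠ 0 ∧ |⟪u, z₀⟫| = |⟪v, z₀⟫| := by
  obtain ⟨z, hz0, hz⟩ := exists_ne_zero_inner_eq_zero (𝕜 := ℝ) (by omega) (u - v)
  rw [inner_sub_left, sub_eq_zero] at hz
  exact ⟨z, hz0, by rw [hz]⟩
end
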